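/- arXiv:1206.1479 — 4 statements merged into one kernel-verified Lean document; each statement's English description precedes it below -/
import Mathlib

section
/- For any positive real numbers N_0, …, N_L satisfying the variance constraint Σ_{ℓ=0}^L V_ℓ / N_ℓ ≤ ε²/2, the total cost satisfies the lower bound Σ_{ℓ=0}^L N_ℓ C_ℓ ≥ (2/ε²) (Σ_{ℓ=0}^L √(V_ℓ C_ℓ))². -/
open Finset

/-- Lower bound on the total MLMC cost under the variance constraint: if the
positive sample numbers `N_ℓ` satisfy `∑ V_ℓ / N_ℓ ≤ ε²/2`, then
`∑ N_ℓ C_ℓ ≥ (2/ε²) (∑ √(V_ℓ C_ℓ))²`. -/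
theorem mlmc_cost_lower_bound
    (L : ℕ) (V C N : ℕ → ℝ) (ε : ℝ) (hε : 0 < ε)
    (hV : ∀ ℓ ≤ L, 0 < V ℓ) (hC : ∀ ℓ ≤ L, 0 < C ℓ) (hN : ∀ ℓ ≤ L, 0 < N ℓ)
    (hvar : ∑ ℓ ∈ range (L + 1), V ℓ / N ℓ ≤ ε ^ 2 / 2) :
    (2 / ε ^ 2) * (∑ ℓ ∈ range (L + 1), Real.sqrt (V ℓ * C ℓ)) ^ 2
      ≤ ∑ ℓ ∈ range (L + 1), N ℓ * C ℓ := by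
  have hcost_nonneg : 0 ≤ ∑ ℓ ∈ range (L + 1), N ℓ * C ℓ :=
    Finset.sum_nonneg fun ℓ hℓ => le_of_lt (mul_pos (hN ℓ (Nat.lt_succ_iff.mp (mem_range.mp hℓ)))
      (hC ℓ (Nat.lt_succ_iff.mp (mem_range.mp hℓ))))
  have key : (∑ ℓ ∈ range (L + 1), Real.sqrt (V ℓ * C ℓ)) ^ 2
      ≤ (∑ ℓ ∈ range (L + 1), V ℓ / N ℓ) * ∑ ℓ ∈ range (L + 1), N ℓ * C ℓ := by
    have h := Finset.sum_mul_sq_le_sq_mul_sq (range (L + 1))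
      (fun ℓ => Real.sqrt (V ℓ / N ℓ)) (fun ℓ => Real.sqrt (N ℓ * C ℓ))
    have e1 : ∀ ℓ ∈ range (L + 1),
        Real.sqrt (V ℓ / N ℓ) * Real.sqrt (N ℓ * C ℓ) = Real.sqrt (V ℓ * C ℓ) := by
      intro ℓ hℓ
      have hℓ' := Nat.lt_succ_iff.mp (mem_range.mp hℓ)
      have h1 := hV ℓ hℓ'; have h2 := hC ℓ hℓ'; have h3 := hN ℓ hℓ'
      rw [← Real.sqrt_mul (by positivity)]
      congr 1
      field_simp
    have e2 : ∀ ℓ ∈ range (L + 1), Real.sqrt (V ℓ / N ℓ) ^ 2 = V ℓ / N ℓ := by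
      intro ℓ hℓ
      have hℓ' := Nat.lt_succ_iff.mp (mem_range.mp hℓ)
      have h1 := hV ℓ hℓ'; have h2 := hC ℓ hℓ'; have h3 := hN ℓ hℓ'
      exact Real.sq_sqrt (by positivity)
    have e3 : ∀ ℓ ∈ range (L + 1), Real.sqrt (N ℓ * C ℓ) ^ 2 = N ℓ * C ℓ := by
      intro ℓ hℓ
      have hℓ' := Nat.lt_succ_iff.mp (mem_range.mp hℓ)
      have h1 := hV ℓ hℓ'; have h2 := hC ℓ hℓ'; have h3 := hN ℓ hℓ'
      exact Real.sq_sqrt (by positivity)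
    rw [Finset.sum_congr rfl e1, Finset.sum_congr rfl e2, Finset.sum_congr rfl e3] at h
    exact h
  have key2 : (∑ ℓ ∈ range (L + 1), Real.sqrt (V ℓ * C ℓ)) ^ 2
      ≤ (ε ^ 2 / 2) * ∑ ℓ ∈ range (L + 1), N ℓ * C ℓ :=
    key.trans (mul_le_mul_of_nonneg_right hvar hcost_nonneg)
  have hε2 : (0:ℝ) < ε ^ 2 := by positivity
  rw [div_mul_eq_mul_div, div_le_iff₀ hε2] at *
  nlinarith [key2]
end

section
/- (Multilevel Monte Carlo complexity, case β > γ.) Assume M1–M3 hold with β > γ and α ≥ ½ min(β, γ). Then there exists a constant K > 0, depending only on α, β, γ, c₁, c₂, c₃, M and h₀, such that for every 0 < ε < e^{−1} there exist a level L ∈ ℕ and positive integers N_0, …, N_L with MSE(L, (N_ℓ)) ≤ ε² and Cost(L, (N_ℓ)) ≤ K ε^{−2}. -/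
/-!
Write `h_ℓ = h₀ M^{-ℓ}` and `S = ∑_ℓ h_ℓ^{(β-γ)/2}`, finite because `β > γ`. The sample sizes
`N_ℓ = ⌈2 c₂ S ε⁻² h_ℓ^{(β+γ)/2}⌉`, i.e. `N_ℓ ∝ √(V_ℓ / C_ℓ)` under M2 and M3, make the variance
part of the mean square error at most `ε² / 2` whatever `L` is, at a cost of at most
`2 c₂ c₃ S² ε⁻² + c₃ ∑_{ℓ ≤ L} h_ℓ^{-γ}`. Let `L` be the first level with `c₁ h_L^α ≤ ε / 2`;
then the squared bias is at most `ε² / 4`. The last sum is geometric, hence `≲ h_L^{-γ}`, and since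
level `L - 1` missed the threshold, `h_L^{-γ} ≲ ε^{-γ/α} ≤ ε⁻²` because `γ ≤ 2α` and `ε ≤ 1`.
-/

open MeasureTheory ProbabilityTheory Finset

noncomputable def meshWidth (h₀ m : ℝ) (ℓ : ℕ) : ℝ := h₀ / m ^ ℓ

section MeshWidth

variable {h₀ m : ℝ}

lemma meshWidth_pos (hh₀ : 0 < h₀) (hm : 0 < m) (ℓ : ℕ) : 0 < meshWidth h₀ m ℓ :=
  div_pos hh₀ (pow_pos hm ℓ)

lemma meshWidth_zero : meshWidth h₀ m 0 = h₀ := by simp [meshWidth]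

lemma meshWidth_succ (ℓ : ℕ) : meshWidth h₀ m (ℓ + 1) = meshWidth h₀ m ℓ / m := by
  rw [meshWidth, meshWidth, pow_succ, div_div]

lemma meshWidth_eq_mul_inv_pow (ℓ : ℕ) : meshWidth h₀ m ℓ = h₀ * m⁻¹ ^ ℓ := by
  rw [meshWidth, div_eq_mul_inv, inv_pow]

lemma meshWidth_rpow (hh₀ : 0 ≤ h₀) (hm : 0 ≤ m) (z : ℝ) (ℓ : ℕ) :
    meshWidth h₀ m ℓ ^ z = meshWidth (h₀ ^ z) (m ^ z) ℓ := by
  rw [meshWidth, meshWidth, Real.div_rpow hh₀ (pow_nonneg hm ℓ), Real.rpow_pow_comm hm]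

lemma sum_range_meshWidth_le (hh₀ : 0 ≤ h₀) (hm : 1 < m) (n : ℕ) :
    ∑ ℓ ∈ range n, meshWidth h₀ m ℓ ≤ h₀ / (1 - m⁻¹) := by
  have hgeom := geom_sum_Ico_le_of_lt_one (m := 0) (n := n) (inv_nonneg.2 (zero_le_one.trans hm.le))
    (inv_lt_one_of_one_lt₀ hm)
  rw [← range_eq_Ico, pow_zero] at hgeom
  simp_rw [meshWidth_eq_mul_inv_pow, ← mul_sum, div_eq_mul_one_div h₀]
  exact mul_le_mul_of_nonneg_left hgeom hh₀

lemma sum_range_succ_meshWidth_le (hh₀ : 0 ≤ h₀) (hm₀ : 0 < m) (hm : m < 1) (L : ℕ) :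
    ∑ ℓ ∈ range (L + 1), meshWidth h₀ m ℓ ≤ meshWidth h₀ m L / (1 - m) := by
  have hterm : ∀ ℓ ∈ range (L + 1), meshWidth h₀ m ℓ = meshWidth h₀ m L * m ^ (L - ℓ) := by
    intro ℓ hℓ
    have hL : m ^ L = m ^ ℓ * m ^ (L - ℓ) := by
      rw [← pow_add, Nat.add_sub_cancel' (Nat.lt_succ_iff.1 (mem_range.1 hℓ))]
    rw [meshWidth, meshWidth, hL]
    field_simp
  have hgeom := geom_sum_Ico_le_of_lt_one (m := 0) (n := L + 1) hm₀.le hm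
  rw [← range_eq_Ico, pow_zero] at hgeom
  have hreflect := sum_range_reflect (fun j => m ^ j) (L + 1)
  simp only [add_tsub_cancel_right] at hreflect
  rw [sum_congr rfl hterm, ← mul_sum, hreflect, div_eq_mul_one_div]
  exact mul_le_mul_of_nonneg_left hgeom (div_nonneg hh₀ (pow_nonneg hm₀.le L))

lemma exists_meshWidth_mem_Icc (hm : 1 < m) {t : ℝ} (ht : 0 < t) :
    ∃ L, meshWidth h₀ m L ∈ Set.Icc (min h₀ (t / m)) t := by
  classical
  have hex : ∃ L, meshWidth h₀ m L ≤ t := by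
    obtain ⟨L, hL⟩ := pow_unbounded_of_one_lt (h₀ / t) hm
    refine ⟨L, (div_lt_iff₀ (pow_pos (zero_lt_one.trans hm) L)).2 ?_ |>.le⟩
    rwa [div_lt_iff₀ ht, mul_comm] at hL
  refine ⟨Nat.find hex, ?_, Nat.find_spec hex⟩
  cases hL : Nat.find hex with
  | zero => exact min_le_of_left_le meshWidth_zero.ge
  | succ k =>
    have hk : t < meshWidth h₀ m k := not_le.1 (Nat.find_min hex (hL ▸ Nat.lt_succ_self k))
    rw [meshWidth_succ]
    exact min_le_of_right_le (div_le_div_of_nonneg_right hk.le (zero_lt_one.trans hm).le)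

lemma exists_meshWidth_le_and_rpow_neg_le (hh₀ : 0 < h₀) (hm : 1 < m) {t γ : ℝ} (ht : 0 < t)
    (hγ : 0 ≤ γ) :
    ∃ L, meshWidth h₀ m L ≤ t ∧ meshWidth h₀ m L ^ (-γ) ≤ h₀ ^ (-γ) + m ^ γ * t ^ (-γ) := by
  have hm₀ : 0 < m := zero_lt_one.trans hm
  obtain ⟨L, hlow, hL⟩ := exists_meshWidth_mem_Icc hm ht
  refine ⟨L, hL, ?_⟩
  have hneg : -γ ≤ 0 := neg_nonpos.2 hγ
  rcases min_le_iff.1 hlow with h | h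
  · have hle := Real.rpow_le_rpow_of_nonpos hh₀ h hneg
    linarith [(by positivity : (0 : ℝ) ≤ m ^ γ * t ^ (-γ))]
  · have hle := Real.rpow_le_rpow_of_nonpos (div_pos ht hm₀) h hneg
    rw [Real.div_rpow ht.le hm₀.le, Real.rpow_neg hm₀.le, div_inv_eq_mul, mul_comm] at hle
    linarith [(by positivity : (0 : ℝ) ≤ h₀ ^ (-γ))]

end MeshWidth

lemma exists_level_bias_le_and_sum_rpow_neg_le {h₀ m c₁ α γ : ℝ} (hh₀ : 0 < h₀) (hm : 1 < m)
    (hc₁ : 0 < c₁) (hα : 0 < α) (hγ : 0 < γ) (hγα : γ ≤ 2 * α) :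
    ∃ K, 0 < K ∧ ∀ ε, 0 < ε → ε ≤ 1 → ∃ L, c₁ * meshWidth h₀ m L ^ α ≤ ε / 2 ∧
      ∑ ℓ ∈ range (L + 1), meshWidth h₀ m ℓ ^ (-γ) ≤ K * ε ^ (-2 : ℝ) := by
  have hm₀ : 0 < m := zero_lt_one.trans hm
  have hr : m ^ (-γ) < 1 := Real.rpow_lt_one_of_one_lt_of_neg hm (neg_lt_zero.2 hγ)
  have hr₀ : 0 < 1 - m ^ (-γ) := sub_pos.2 hr
  refine ⟨(h₀ ^ (-γ) + m ^ γ * (2 * c₁) ^ (γ / α)) / (1 - m ^ (-γ)), by positivity,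
    fun ε hε hε₁ => ?_⟩
  set t := (ε / (2 * c₁)) ^ α⁻¹ with ht_def
  have ht : 0 < t := by positivity
  obtain ⟨L, htL, hLγ⟩ := exists_meshWidth_le_and_rpow_neg_le hh₀ hm ht hγ.le
  refine ⟨L, ?_, ?_⟩
  · calc c₁ * meshWidth h₀ m L ^ α ≤ c₁ * t ^ α := by
          gcongr
          exact (meshWidth_pos hh₀ hm₀ L).le
      _ = ε / 2 := by
          rw [Real.rpow_inv_rpow (by positivity) hα.ne']
          field_simp
  have ht_γ : t ^ (-γ) ≤ (2 * c₁) ^ (γ / α) * ε ^ (-2 : ℝ) := by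
    have hεγ : ε ^ (-(γ / α)) ≤ ε ^ (-2 : ℝ) :=
      Real.rpow_le_rpow_of_exponent_ge hε hε₁ (by rw [neg_le_neg_iff, div_le_iff₀ hα]; linarith)
    rw [ht_def, ← Real.rpow_mul (by positivity), inv_mul_eq_div, neg_div,
      Real.div_rpow hε.le (by positivity), Real.rpow_neg (by positivity : (0 : ℝ) ≤ 2 * c₁),
      div_inv_eq_mul, mul_comm]
    gcongr
  have hε₂ : 1 ≤ ε ^ (-2 : ℝ) := Real.one_le_rpow_of_pos_of_le_one_of_nonpos hε hε₁ (by norm_num)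
  calc ∑ ℓ ∈ range (L + 1), meshWidth h₀ m ℓ ^ (-γ)
      = ∑ ℓ ∈ range (L + 1), meshWidth (h₀ ^ (-γ)) (m ^ (-γ)) ℓ := by
        simp_rw [meshWidth_rpow hh₀.le hm₀.le]
    _ ≤ meshWidth h₀ m L ^ (-γ) / (1 - m ^ (-γ)) := by
        rw [meshWidth_rpow hh₀.le hm₀.le]
        exact sum_range_succ_meshWidth_le (by positivity) (by positivity) hr L
    _ ≤ (h₀ ^ (-γ) * ε ^ (-2 : ℝ) + m ^ γ * ((2 * c₁) ^ (γ / α) * ε ^ (-2 : ℝ)))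
          / (1 - m ^ (-γ)) := by
        gcongr
        refine hLγ.trans (add_le_add (le_mul_of_one_le_right (by positivity) hε₂) ?_)
        gcongr
    _ = (h₀ ^ (-γ) + m ^ γ * (2 * c₁) ^ (γ / α)) / (1 - m ^ (-γ)) * ε ^ (-2 : ℝ) := by ring

section SampleSizes

variable {ι : Type*} (s : Finset ι) {x V : ι → ℝ} {a β γ : ℝ}

lemma sum_div_ceil_rpow_le {c₂ : ℝ} (hx : ∀ i ∈ s, 0 < x i) (ha : 0 < a) (hc₂ : 0 ≤ c₂)
    (hV : ∀ i ∈ s, V i ≤ c₂ * x i ^ β) :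
    ∑ i ∈ s, V i / ⌈a * x i ^ ((β + γ) / 2)⌉₊ ≤ c₂ / a * ∑ i ∈ s, x i ^ ((β - γ) / 2) := by
  rw [mul_sum]
  refine sum_le_sum fun i hi => ?_
  have hxi := hx i hi
  calc V i / ⌈a * x i ^ ((β + γ) / 2)⌉₊ ≤ c₂ * x i ^ β / ⌈a * x i ^ ((β + γ) / 2)⌉₊ :=
        div_le_div_of_nonneg_right (hV i hi) (Nat.cast_nonneg _)
    _ ≤ c₂ * x i ^ β / (a * x i ^ ((β + γ) / 2)) :=
        div_le_div_of_nonneg_left (by positivity) (by positivity) (Nat.le_ceil _)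
    _ = c₂ / a * x i ^ ((β - γ) / 2) := by
        rw [show (β - γ) / 2 = β - (β + γ) / 2 by ring, Real.rpow_sub hxi]
        field_simp

lemma sum_ceil_rpow_mul_le {c₃ : ℝ} (hx : ∀ i ∈ s, 0 < x i) (ha : 0 ≤ a) (hc₃ : 0 ≤ c₃) :
    ∑ i ∈ s, (⌈a * x i ^ ((β + γ) / 2)⌉₊ : ℝ) * (c₃ * x i ^ (-γ))
      ≤ a * c₃ * ∑ i ∈ s, x i ^ ((β - γ) / 2) + c₃ * ∑ i ∈ s, x i ^ (-γ) := by
  rw [mul_sum, mul_sum, ← sum_add_distrib]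
  refine sum_le_sum fun i hi => ?_
  have hxi := hx i hi
  calc (⌈a * x i ^ ((β + γ) / 2)⌉₊ : ℝ) * (c₃ * x i ^ (-γ))
      ≤ (a * x i ^ ((β + γ) / 2) + 1) * (c₃ * x i ^ (-γ)) := by
        gcongr
        exact (Nat.ceil_lt_add_one (by positivity)).le
    _ = a * c₃ * x i ^ ((β - γ) / 2) + c₃ * x i ^ (-γ) := by
        rw [show (β - γ) / 2 = (β + γ) / 2 + -γ by ring, Real.rpow_add hxi]
        ring

end SampleSizes

theorem exists_levels_mse_le_and_cost_le {h₀ m α β γ c₁ c₂ c₃ : ℝ} (hh₀ : 0 < h₀) (hm : 1 < m)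
    (hα : 0 < α) (hγ : 0 < γ) (hγβ : γ < β) (hγα : γ ≤ 2 * α)
    (hc₁ : 0 < c₁) (hc₂ : 0 < c₂) (hc₃ : 0 < c₃) {V b : ℕ → ℝ}
    (hb : ∀ ℓ, |b ℓ| ≤ c₁ * meshWidth h₀ m ℓ ^ α) (hV : ∀ ℓ, V ℓ ≤ c₂ * meshWidth h₀ m ℓ ^ β) :
    ∃ K : ℝ, 0 < K ∧ ∀ ε : ℝ, 0 < ε → ε ≤ 1 →
      ∃ (L : ℕ) (N : ℕ → ℕ), (∀ ℓ ≤ L, 1 ≤ N ℓ) ∧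
        ∑ ℓ ∈ range (L + 1), V ℓ / (N ℓ : ℝ) + b L ^ 2 ≤ ε ^ 2 ∧
        ∑ ℓ ∈ range (L + 1), (N ℓ : ℝ) * (c₃ * meshWidth h₀ m ℓ ^ (-γ)) ≤ K * ε ^ (-2 : ℝ) := by
  have hm₀ : 0 < m := zero_lt_one.trans hm
  obtain ⟨K, hK, hlevel⟩ := exists_level_bias_le_and_sum_rpow_neg_le hh₀ hm hc₁ hα hγ hγα
  set S := h₀ ^ ((β - γ) / 2) / (1 - (m ^ ((β - γ) / 2))⁻¹)
  have hr : 1 < m ^ ((β - γ) / 2) := Real.one_lt_rpow hm (by linarith)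
  have hS : ∀ n, ∑ ℓ ∈ range n, meshWidth h₀ m ℓ ^ ((β - γ) / 2) ≤ S := fun n => by
    simp_rw [meshWidth_rpow hh₀.le hm₀.le]
    exact sum_range_meshWidth_le (by positivity) hr n
  have hS₀ : 0 < S := div_pos (by positivity) (sub_pos.2 (inv_lt_one_of_one_lt₀ hr))
  refine ⟨2 * c₂ * c₃ * S ^ 2 + c₃ * K, by positivity, fun ε hε hε₁ => ?_⟩
  obtain ⟨L, hbias, hcost⟩ := hlevel ε hε hε₁
  have hx : ∀ ℓ ∈ range (L + 1), 0 < meshWidth h₀ m ℓ := fun ℓ _ => meshWidth_pos hh₀ hm₀ ℓ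
  set a := 2 * c₂ * S / ε ^ 2
  have ha : 0 < a := by positivity
  refine ⟨L, fun ℓ => ⌈a * meshWidth h₀ m ℓ ^ ((β + γ) / 2)⌉₊, fun ℓ _ =>
    Nat.one_le_ceil_iff.2 (mul_pos ha (Real.rpow_pos_of_pos (meshWidth_pos hh₀ hm₀ ℓ) _)), ?_, ?_⟩
  · have hbL : b L ^ 2 ≤ (ε / 2) ^ 2 := by
      rw [← sq_abs]
      exact pow_le_pow_left₀ (abs_nonneg _) ((hb L).trans hbias) 2
    calc _ ≤ c₂ / a * S + (ε / 2) ^ 2 := by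
          gcongr
          exact (sum_div_ceil_rpow_le _ hx ha hc₂.le fun ℓ _ => hV ℓ).trans
            (by gcongr; exact hS _)
      _ ≤ ε ^ 2 := by
          simp only [a]
          field_simp
          nlinarith
  · have hε₂ : ε ^ (-2 : ℝ) = (ε ^ 2)⁻¹ := by
      rw [Real.rpow_neg hε.le]
      norm_cast
    calc _ ≤ a * c₃ * S + c₃ * (K * ε ^ (-2 : ℝ)) :=
          (sum_ceil_rpow_mul_le _ hx ha.le hc₃.le).trans (by gcongr; exact hS _)
      _ = (2 * c₂ * c₃ * S ^ 2 + c₃ * K) * ε ^ (-2 : ℝ) := by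
          rw [hε₂]
          ring

theorem mlmc_complexity_beta_gt_gamma_general
    {Ω : Type*} [MeasurableSpace Ω] {P : Measure Ω}
    (M : ℕ) (hM : 2 ≤ M) (h₀ : ℝ) (hh₀ : 0 < h₀)
    (Q : Ω → ℝ)
    (Qlev : ℕ → Ω → ℝ)
    (Y : ℕ → Ω → ℝ)
    (α β γ c₁ c₂ c₃ : ℝ)
    (hα : 0 < α) (hγ : 0 < γ) (hc₁ : 0 < c₁) (hc₂ : 0 < c₂) (hc₃ : 0 < c₃)
    (hβγ : β > γ) (hαβγ : α ≥ min β γ / 2)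
    (hM1 : ∀ ℓ : ℕ, |∫ ω, (Qlev ℓ ω - Q ω) ∂P| ≤ c₁ * (h₀ / (M : ℝ) ^ ℓ) ^ α)
    (hM2 : ∀ ℓ : ℕ, variance (Y ℓ) P ≤ c₂ * (h₀ / (M : ℝ) ^ ℓ) ^ β) :
    ∃ K : ℝ, 0 < K ∧ ∀ ε : ℝ, 0 < ε → ε < Real.exp (-1) →
      ∃ (L : ℕ) (N : ℕ → ℕ), (∀ ℓ ≤ L, 1 ≤ N ℓ) ∧
        (∑ ℓ ∈ range (L + 1), variance (Y ℓ) P / (N ℓ : ℝ))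
            + (∫ ω, (Qlev L ω - Q ω) ∂P) ^ 2 ≤ ε ^ 2 ∧
        ∑ ℓ ∈ range (L + 1), (N ℓ : ℝ) * (c₃ * (h₀ / (M : ℝ) ^ ℓ) ^ (-γ))
            ≤ K * ε ^ (-2 : ℝ) := by
  have hm : (1 : ℝ) < M := by exact_mod_cast hM
  have hγα : γ ≤ 2 * α := by
    rw [min_eq_right hβγ.le] at hαβγ
    linarith
  obtain ⟨K, hK, hmlmc⟩ :=
    exists_levels_mse_le_and_cost_le hh₀ hm hα hγ hβγ hγα hc₁ hc₂ hc₃ hM1 hM2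
  have hexp : Real.exp (-1) < 1 := Real.exp_lt_one_iff.2 (by norm_num)
  exact ⟨K, hK, fun ε hε hεe => hmlmc ε hε (hεe.trans hexp).le⟩

/-- Multilevel Monte Carlo complexity theorem, case `β > γ`: under M1–M3 with
`α ≥ ½ min(β,γ)`, for every `0 < ε < e⁻¹` there are a level `L` and sample
numbers `N_ℓ` such that the MLMC mean square error is at most `ε²` and the
total cost is at most `K ε⁻²`, with `K` independent of `ε`. -/
theorem mlmc_complexity_beta_gt_gamma
    {Ω : Type*} [MeasurableSpace Ω] {P : Measure Ω} [IsProbabilityMeasure P]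
    (M : ℕ) (hM : 2 ≤ M) (h₀ : ℝ) (hh₀ : 0 < h₀)
    (Q : Ω → ℝ) (hQ : MemLp Q 2 P)
    (Qlev : ℕ → Ω → ℝ) (hQlev : ∀ ℓ, MemLp (Qlev ℓ) 2 P)
    (Y : ℕ → Ω → ℝ) (hY0 : Y 0 = Qlev 0)
    (hYl : ∀ ℓ : ℕ, Y (ℓ + 1) = fun ω => Qlev (ℓ + 1) ω - Qlev ℓ ω)
    (α β γ c₁ c₂ c₃ : ℝ)
    (hα : 0 < α) (hβ : 0 < β) (hγ : 0 < γ) (hc₁ : 0 < c₁) (hc₂ : 0 < c₂) (hc₃ : 0 < c₃)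
    (hβγ : β > γ) (hαβγ : α ≥ min β γ / 2)
    (hM1 : ∀ ℓ : ℕ, |∫ ω, (Qlev ℓ ω - Q ω) ∂P| ≤ c₁ * (h₀ / (M : ℝ) ^ ℓ) ^ α)
    (hM2 : ∀ ℓ : ℕ, variance (Y ℓ) P ≤ c₂ * (h₀ / (M : ℝ) ^ ℓ) ^ β) :
    ∃ K : ℝ, 0 < K ∧ ∀ ε : ℝ, 0 < ε → ε < Real.exp (-1) →
      ∃ (L : ℕ) (N : ℕ → ℕ), (∀ ℓ ≤ L, 1 ≤ N ℓ) ∧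
        (∑ ℓ ∈ range (L + 1), variance (Y ℓ) P / (N ℓ : ℝ))
            + (∫ ω, (Qlev L ω - Q ω) ∂P) ^ 2 ≤ ε ^ 2 ∧
        ∑ ℓ ∈ range (L + 1), (N ℓ : ℝ) * (c₃ * (h₀ / (M : ℝ) ^ ℓ) ^ (-γ))
            ≤ K * ε ^ (-2 : ℝ) :=
  mlmc_complexity_beta_gt_gamma_general M hM h₀ hh₀ Q Qlev Y α β γ c₁ c₂ c₃ hα hγ hc₁ hc₂ hc₃ hβγ
    hαβγ hM1 hM2
end

section
/- (Multilevel Monte Carlo complexity, case β = γ.) Assume M1–M3 hold with β = γ and α ≥ ½ min(β, γ). Then there exists a constant K > 0, depending only on α, β, γ, c₁, c₂, c₃, M and h₀, such that for every 0 < ε < e^{−1} there exist a level L ∈ ℕ and positive integers N_0, …, N_L with MSE(L, (N_ℓ)) ≤ ε² and Cost(L, (N_ℓ)) ≤ K ε^{−2} (log ε)². -/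
/-!
Take the first level `L` with `√2 c₁ h_L^α ≤ ε`, so that the squared bias is at most `ε²/2`, and
`N_ℓ = ⌈2 ε⁻² (L+1) c₂ h_ℓ^β⌉`, so that the variance term is at most `ε²/2`. Minimality of `L`
gives `h_L ≳ ε^{1/α}`, hence `L = O(|log ε|)` and `h_L^{-γ} ≲ ε^{-γ/α} ≤ ε⁻²` because `γ ≤ 2α`.
Since `β = γ`, the level-`ℓ` cost is `N_ℓ C_ℓ ≤ 2 c₂ c₃ (L+1) ε⁻² + C_ℓ`, and summing over the
`L + 1` levels gives `O((L+1)² ε⁻²) = O(ε⁻² log² ε)`.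
-/

open MeasureTheory ProbabilityTheory Finset

section Mesh

variable {M h₀ : ℝ}

lemma exists_div_pow_mem_Icc (hM : 1 < M) {s : ℝ} (hs : 0 < s) :
    ∃ L : ℕ, h₀ / M ^ L ∈ Set.Icc (min h₀ (s / M)) s := by
  have hM₀ : 0 < M := one_pos.trans hM
  have hex : ∃ L : ℕ, h₀ / M ^ L ≤ s := by
    obtain ⟨L, hL⟩ := pow_unbounded_of_one_lt (h₀ / s) hM
    exact ⟨L, (div_le_iff₀ (pow_pos hM₀ L)).2 (by rw [div_lt_iff₀ hs] at hL; linarith)⟩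
  classical
  refine ⟨Nat.find hex, ?_, Nat.find_spec hex⟩
  rcases hfind : Nat.find hex with _ | L
  · simp
  · have hL : s < h₀ / M ^ L := not_le.1 (Nat.find_min hex (by omega))
    rw [pow_succ, ← div_div]
    exact min_le_of_right_le (div_le_div_of_nonneg_right hL.le hM₀.le)

lemma exists_level_mul_rpow_le (hM : 1 < M) (hh₀ : 0 < h₀) {c α : ℝ} (hc : 0 < c)
    (hα : 0 < α) :
    ∃ κ > 0, ∀ ε, 0 < ε → ε ≤ 1 →
      ∃ L : ℕ, c * (h₀ / M ^ L) ^ α ≤ ε ∧ κ * ε ^ α⁻¹ ≤ h₀ / M ^ L := by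
  have hM₀ : 0 < M := one_pos.trans hM
  refine ⟨min h₀ ((c ^ α⁻¹)⁻¹ / M), by positivity, fun ε hε hε1 => ?_⟩
  obtain ⟨L, hlo, hhi⟩ := exists_div_pow_mem_Icc hM (s := (ε / c) ^ α⁻¹) (by positivity)
  refine ⟨L, ?_, le_trans ?_ hlo⟩
  · calc c * (h₀ / M ^ L) ^ α ≤ c * ((ε / c) ^ α⁻¹) ^ α := by gcongr
      _ = ε := by rw [Real.rpow_inv_rpow (by positivity) hα.ne']; field_simp
  · have hεα : ε ^ α⁻¹ ≤ 1 := Real.rpow_le_one hε.le hε1 (by positivity)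
    have hεα₀ : 0 ≤ ε ^ α⁻¹ := by positivity
    refine le_min ?_ ?_
    · calc min h₀ ((c ^ α⁻¹)⁻¹ / M) * ε ^ α⁻¹ ≤ h₀ * 1 := by gcongr; exact min_le_left _ _
        _ = h₀ := mul_one h₀
    · calc min h₀ ((c ^ α⁻¹)⁻¹ / M) * ε ^ α⁻¹ ≤ (c ^ α⁻¹)⁻¹ / M * ε ^ α⁻¹ := by
            gcongr; exact min_le_right _ _
        _ = (ε / c) ^ α⁻¹ / M := by rw [Real.div_rpow hε.le hc.le]; ring

lemma natCast_add_one_le_mul_neg_log (hM : 1 < M) (hh₀ : 0 < h₀) {κ a ε : ℝ} {L : ℕ}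
    (hκ : 0 < κ) (hε : 0 < ε) (hεe : ε ≤ Real.exp (-1))
    (hL : κ * ε ^ a ≤ h₀ / M ^ L) :
    (L : ℝ) + 1 ≤ ((|Real.log (h₀ / κ)| + a) / Real.log M + 1) * -Real.log ε := by
  have hM₀ : 0 < M := one_pos.trans hM
  have hlogM : 0 < Real.log M := Real.log_pos hM
  have hlogε : 1 ≤ -Real.log ε := by
    have := Real.log_le_log hε hεe
    rw [Real.log_exp] at this
    linarith
  have hpow : M ^ L ≤ h₀ / κ / ε ^ a := by
    rw [div_div, le_div_iff₀ (by positivity)]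
    rw [le_div_iff₀ (by positivity)] at hL
    linarith
  have hlog : L * Real.log M ≤ Real.log (h₀ / κ) + a * -Real.log ε := by
    have := Real.log_le_log (by positivity) hpow
    rw [Real.log_pow, Real.log_div (by positivity) (by positivity), Real.log_rpow hε] at this
    linarith
  have hL' : (L : ℝ) ≤ (|Real.log (h₀ / κ)| + a) / Real.log M * -Real.log ε := by
    rw [div_mul_eq_mul_div, le_div_iff₀ hlogM]
    nlinarith [le_abs_self (Real.log (h₀ / κ)), abs_nonneg (Real.log (h₀ / κ))]
  nlinarith

lemma rpow_neg_le_of_mul_rpow_inv_le {h κ ε α γ : ℝ} (hκ : 0 < κ) (hε : 0 < ε) (hε1 : ε ≤ 1)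
    (hα : 0 < α) (hγ : 0 ≤ γ) (hγα : γ ≤ 2 * α) (hh : κ * ε ^ α⁻¹ ≤ h) :
    h ^ (-γ) ≤ κ ^ (-γ) * ε ^ (-2 : ℝ) := by
  calc h ^ (-γ) ≤ (κ * ε ^ α⁻¹) ^ (-γ) :=
        Real.rpow_le_rpow_of_nonpos (by positivity) hh (by linarith)
    _ = κ ^ (-γ) * ε ^ (α⁻¹ * -γ) := by
      rw [Real.mul_rpow hκ.le (by positivity), Real.rpow_mul hε.le]
    _ ≤ κ ^ (-γ) * ε ^ (-2 : ℝ) := by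
      refine mul_le_mul_of_nonneg_left (Real.rpow_le_rpow_of_exponent_ge hε hε1 ?_)
        (by positivity)
      rw [mul_neg, neg_le_neg_iff, inv_mul_le_iff₀ hα]
      linarith

lemma sum_range_succ_div_pow_rpow_neg_le {γ : ℝ} (hM : 1 ≤ M) (hh₀ : 0 < h₀) (hγ : 0 ≤ γ)
    (L : ℕ) : ∑ ℓ ∈ range (L + 1), (h₀ / M ^ ℓ) ^ (-γ) ≤ (L + 1) * (h₀ / M ^ L) ^ (-γ) := by
  have hM₀ : 0 < M := one_pos.trans_le hM
  calc ∑ ℓ ∈ range (L + 1), (h₀ / M ^ ℓ) ^ (-γ)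
      ≤ ∑ _ℓ ∈ range (L + 1), (h₀ / M ^ L) ^ (-γ) := by
        refine sum_le_sum fun ℓ hℓ => Real.rpow_le_rpow_of_nonpos (by positivity) ?_ (by linarith)
        exact div_le_div_of_nonneg_left hh₀.le (by positivity)
          (pow_le_pow_right₀ hM (Nat.lt_succ_iff.1 (mem_range.1 hℓ)))
    _ = (L + 1) * (h₀ / M ^ L) ^ (-γ) := by simp

end Mesh

noncomputable def mlmcSampleSize (n : ℕ) (δ v : ℝ) : ℕ := ⌈n * v / δ⌉₊

section Allocation

variable {V v C : ℕ → ℝ} {n : ℕ} {δ : ℝ}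

lemma sum_div_mlmcSampleSize_le (hδ : 0 < δ) (hv : ∀ ℓ ∈ range n, 0 < v ℓ)
    (hV : ∀ ℓ ∈ range n, V ℓ ≤ v ℓ) :
    ∑ ℓ ∈ range n, V ℓ / mlmcSampleSize n δ (v ℓ) ≤ δ := by
  rcases Nat.eq_zero_or_pos n with rfl | hn
  · simp [hδ.le]
  calc ∑ ℓ ∈ range n, V ℓ / mlmcSampleSize n δ (v ℓ) ≤ ∑ _ℓ ∈ range n, δ / n := by
        refine sum_le_sum fun ℓ hℓ => ?_
        have hvℓ := hv ℓ hℓ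
        have hN : n * v ℓ / δ ≤ mlmcSampleSize n δ (v ℓ) := Nat.le_ceil _
        calc V ℓ / mlmcSampleSize n δ (v ℓ) ≤ v ℓ / (n * v ℓ / δ) := by
              gcongr
              exact hV ℓ hℓ
          _ = δ / n := by field_simp
    _ = δ := by simp; field_simp

lemma sum_mlmcSampleSize_mul_le (hδ : 0 < δ) (hv : ∀ ℓ ∈ range n, 0 ≤ v ℓ)
    (hC : ∀ ℓ ∈ range n, 0 ≤ C ℓ) :
    ∑ ℓ ∈ range n, (mlmcSampleSize n δ (v ℓ) : ℝ) * C ℓ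
      ≤ n / δ * ∑ ℓ ∈ range n, v ℓ * C ℓ + ∑ ℓ ∈ range n, C ℓ := by
  rw [mul_sum, ← sum_add_distrib]
  refine sum_le_sum fun ℓ hℓ => ?_
  have hN : (mlmcSampleSize n δ (v ℓ) : ℝ) < n * v ℓ / δ + 1 :=
    Nat.ceil_lt_add_one (by have := hv ℓ hℓ; positivity)
  calc (mlmcSampleSize n δ (v ℓ) : ℝ) * C ℓ ≤ (n * v ℓ / δ + 1) * C ℓ := by
        gcongr
        exact hC ℓ hℓ
    _ = n / δ * (v ℓ * C ℓ) + C ℓ := by ring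

end Allocation

lemma sum_mlmcSampleSize_mul_cost_le {M h₀ β c₂ c₃ B ε : ℝ} {L : ℕ} (hM : 1 ≤ M)
    (hh₀ : 0 < h₀) (hβ : 0 ≤ β) (hc₂ : 0 ≤ c₂) (hc₃ : 0 ≤ c₃) (hε : 0 < ε)
    (hfine : (h₀ / M ^ L) ^ (-β) ≤ B * ε ^ (-2 : ℝ)) :
    ∑ ℓ ∈ range (L + 1), (mlmcSampleSize (L + 1) (ε ^ 2 / 2) (c₂ * (h₀ / M ^ ℓ) ^ β) : ℝ)
        * (c₃ * (h₀ / M ^ ℓ) ^ (-β))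
      ≤ (2 * c₂ * c₃ + c₃ * B) * (L + 1) ^ 2 * ε ^ (-2 : ℝ) := by
  have hM₀ : 0 < M := one_pos.trans_le hM
  have hcancel : ∀ ℓ : ℕ, c₂ * (h₀ / M ^ ℓ) ^ β * (c₃ * (h₀ / M ^ ℓ) ^ (-β)) = c₂ * c₃ := by
    intro ℓ
    rw [Real.rpow_neg (by positivity)]
    field_simp
  have hε2 : ε ^ (-2 : ℝ) = (ε ^ 2)⁻¹ := by rw [Real.rpow_neg hε.le]; norm_cast
  have hB : 0 ≤ c₃ * (B * ε ^ (-2 : ℝ)) :=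
    mul_nonneg hc₃ ((Real.rpow_pos_of_pos (by positivity) _).le.trans hfine)
  have hL : (L : ℝ) + 1 ≤ (L + 1) ^ 2 := by nlinarith
  calc _ ≤ _ := sum_mlmcSampleSize_mul_le (by positivity) (fun ℓ _ => by positivity)
        fun ℓ _ => by positivity
    _ = 2 * (L + 1) ^ 2 * c₂ * c₃ * ε ^ (-2 : ℝ)
          + c₃ * ∑ ℓ ∈ range (L + 1), (h₀ / M ^ ℓ) ^ (-β) := by
      simp only [hcancel, sum_const, card_range, nsmul_eq_mul, ← mul_sum, hε2]
      push_cast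
      field_simp
    _ ≤ 2 * (L + 1) ^ 2 * c₂ * c₃ * ε ^ (-2 : ℝ) + (L + 1) * (c₃ * (B * ε ^ (-2 : ℝ))) := by
      have := sum_range_succ_div_pow_rpow_neg_le hM hh₀ hβ L
      have : (L + 1) * (h₀ / M ^ L) ^ (-β) ≤ (L + 1) * (B * ε ^ (-2 : ℝ)) := by gcongr
      nlinarith
    _ ≤ (2 * c₂ * c₃ + c₃ * B) * (L + 1) ^ 2 * ε ^ (-2 : ℝ) := by
      nlinarith [mul_le_mul_of_nonneg_right hL hB]

lemma sq_le_half_sq_of_sqrt_two_mul_abs_le {b ε : ℝ} (h : √2 * |b| ≤ ε) : b ^ 2 ≤ ε ^ 2 / 2 := by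
  have := pow_le_pow_left₀ (by positivity) h 2
  rw [mul_pow, Real.sq_sqrt zero_le_two, sq_abs] at this
  linarith

theorem mlmc_complexity_beta_eq_gamma_general
    {Ω : Type*} [MeasurableSpace Ω] {P : Measure Ω}
    (M : ℕ) (hM : 2 ≤ M) (h₀ : ℝ) (hh₀ : 0 < h₀)
    (Q : Ω → ℝ)
    (Qlev : ℕ → Ω → ℝ)
    (Y : ℕ → Ω → ℝ)
    (α β γ c₁ c₂ c₃ : ℝ)
    (hα : 0 < α) (hγ : 0 < γ) (hc₁ : 0 < c₁) (hc₂ : 0 < c₂) (hc₃ : 0 < c₃)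
    (hβγ : β = γ) (hαβγ : α ≥ min β γ / 2)
    (hM1 : ∀ ℓ : ℕ, |∫ ω, (Qlev ℓ ω - Q ω) ∂P| ≤ c₁ * (h₀ / (M : ℝ) ^ ℓ) ^ α)
    (hM2 : ∀ ℓ : ℕ, variance (Y ℓ) P ≤ c₂ * (h₀ / (M : ℝ) ^ ℓ) ^ β) :
    ∃ K : ℝ, 0 < K ∧ ∀ ε : ℝ, 0 < ε → ε < Real.exp (-1) →
      ∃ (L : ℕ) (N : ℕ → ℕ), (∀ ℓ ≤ L, 1 ≤ N ℓ) ∧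
        (∑ ℓ ∈ range (L + 1), variance (Y ℓ) P / (N ℓ : ℝ))
            + (∫ ω, (Qlev L ω - Q ω) ∂P) ^ 2 ≤ ε ^ 2 ∧
        ∑ ℓ ∈ range (L + 1), (N ℓ : ℝ) * (c₃ * (h₀ / (M : ℝ) ^ ℓ) ^ (-γ))
            ≤ K * ε ^ (-2 : ℝ) * Real.log ε ^ 2 := by
  subst hβγ
  have hM' : (1 : ℝ) < M := by exact_mod_cast hM
  have hβα : β ≤ 2 * α := by rw [min_self] at hαβγ; linarith
  obtain ⟨κ, hκ, hlevel⟩ := exists_level_mul_rpow_le hM' hh₀ (c := √2 * c₁) (by positivity) hα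
  set C := (|Real.log (h₀ / κ)| + α⁻¹) / Real.log M + 1
  refine ⟨(2 * c₂ * c₃ + c₃ * κ ^ (-β)) * C ^ 2, by positivity, fun ε hε hεe => ?_⟩
  have hε1 : ε ≤ 1 := hεe.le.trans (Real.exp_le_one_iff.2 (by norm_num))
  obtain ⟨L, hbias, hmesh⟩ := hlevel ε hε hε1
  have hLC := natCast_add_one_le_mul_neg_log hM' hh₀ hκ hε hεe.le hmesh
  refine ⟨L, fun ℓ => mlmcSampleSize (L + 1) (ε ^ 2 / 2) (c₂ * (h₀ / (M : ℝ) ^ ℓ) ^ β),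
    fun ℓ _ => Nat.one_le_ceil_iff.2 (by positivity), ?_, ?_⟩
  · have hvar := sum_div_mlmcSampleSize_le (n := L + 1) (by positivity : 0 < ε ^ 2 / 2)
      (fun ℓ _ => by positivity) fun ℓ _ => hM2 ℓ
    have hbias2 := sq_le_half_sq_of_sqrt_two_mul_abs_le <|
      (mul_le_mul_of_nonneg_left (hM1 L) (by positivity)).trans
        ((mul_assoc _ _ _).symm.trans_le hbias)
    linarith
  · calc _ ≤ (2 * c₂ * c₃ + c₃ * κ ^ (-β)) * (L + 1) ^ 2 * ε ^ (-2 : ℝ) :=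
          sum_mlmcSampleSize_mul_cost_le hM'.le hh₀ hγ.le hc₂.le hc₃.le hε
            (rpow_neg_le_of_mul_rpow_inv_le hκ hε hε1 hα hγ.le hβα hmesh)
      _ ≤ (2 * c₂ * c₃ + c₃ * κ ^ (-β)) * (C * -Real.log ε) ^ 2 * ε ^ (-2 : ℝ) := by gcongr
      _ = _ := by ring

/-- Multilevel Monte Carlo complexity theorem, case `β = γ`: under M1–M3 with
`α ≥ ½ min(β,γ)`, for every `0 < ε < e⁻¹` there are a level `L` and sample
numbers `N_ℓ` such that the MLMC mean square error is at most `ε²` and the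
total cost is at most `K ε⁻² (log ε)²`, with `K` independent of `ε`. -/
theorem mlmc_complexity_beta_eq_gamma
    {Ω : Type*} [MeasurableSpace Ω] {P : Measure Ω} [IsProbabilityMeasure P]
    (M : ℕ) (hM : 2 ≤ M) (h₀ : ℝ) (hh₀ : 0 < h₀)
    (Q : Ω → ℝ) (hQ : MemLp Q 2 P)
    (Qlev : ℕ → Ω → ℝ) (hQlev : ∀ ℓ, MemLp (Qlev ℓ) 2 P)
    (Y : ℕ → Ω → ℝ) (hY0 : Y 0 = Qlev 0)
    (hYl : ∀ ℓ : ℕ, Y (ℓ + 1) = fun ω => Qlev (ℓ + 1) ω - Qlev ℓ ω)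
    (α β γ c₁ c₂ c₃ : ℝ)
    (hα : 0 < α) (hβ : 0 < β) (hγ : 0 < γ) (hc₁ : 0 < c₁) (hc₂ : 0 < c₂) (hc₃ : 0 < c₃)
    (hβγ : β = γ) (hαβγ : α ≥ min β γ / 2)
    (hM1 : ∀ ℓ : ℕ, |∫ ω, (Qlev ℓ ω - Q ω) ∂P| ≤ c₁ * (h₀ / (M : ℝ) ^ ℓ) ^ α)
    (hM2 : ∀ ℓ : ℕ, variance (Y ℓ) P ≤ c₂ * (h₀ / (M : ℝ) ^ ℓ) ^ β) :
    ∃ K : ℝ, 0 < K ∧ ∀ ε : ℝ, 0 < ε → ε < Real.exp (-1) →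
      ∃ (L : ℕ) (N : ℕ → ℕ), (∀ ℓ ≤ L, 1 ≤ N ℓ) ∧
        (∑ ℓ ∈ range (L + 1), variance (Y ℓ) P / (N ℓ : ℝ))
            + (∫ ω, (Qlev L ω - Q ω) ∂P) ^ 2 ≤ ε ^ 2 ∧
        ∑ ℓ ∈ range (L + 1), (N ℓ : ℝ) * (c₃ * (h₀ / (M : ℝ) ^ ℓ) ^ (-γ))
            ≤ K * ε ^ (-2 : ℝ) * Real.log ε ^ 2 :=
  mlmc_complexity_beta_eq_gamma_general M hM h₀ hh₀ Q Qlev Y α β γ c₁ c₂ c₃ hα hγ hc₁ hc₂ hc₃ hβγ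
    hαβγ hM1 hM2
end

section
/- (Multilevel Monte Carlo complexity, case β < γ.) Assume M1–M3 hold with β < γ and α ≥ ½ min(β, γ). Then there exists a constant K > 0, depending only on α, β, γ, c₁, c₂, c₃, M and h₀, such that for every 0 < ε < e^{−1} there exist a level L ∈ ℕ and positive integers N_0, …, N_L with MSE(L, (N_ℓ)) ≤ ε² and Cost(L, (N_ℓ)) ≤ K ε^{−2−(γ−β)/α}. -/
/-!
Take the coarsest level `L` whose bias bound `c₁ h_L^α` is below `ε / √2`, so that
`h_L⁻¹ ≲ ε^(-1/α)`. Distribute the variance budget `ε² / 2` over the levels with the classical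
allocation `N_ℓ ∝ √(V_ℓ / C_ℓ)`; its cost is at most `2 ε⁻² (∑ √(V_ℓ C_ℓ))² + ∑ C_ℓ`. Because
`β < γ`, both sums are geometric series dominated by their finest term, of orders
`h_L^(-(γ-β)/2)` and `h_L^(-γ)`. The first gives `ε^(-2-(γ-β)/α)`, and `β ≤ 2α` makes the second
of at most that order.
-/

open MeasureTheory ProbabilityTheory Finset

theorem sum_range_succ_le_of_le_mul_succ {a : ℕ → ℝ} {r : ℝ} (hr₀ : 0 ≤ r) (hr₁ : r < 1)
    (ha : ∀ n, 0 ≤ a n) (hstep : ∀ n, a n ≤ r * a (n + 1)) (L : ℕ) :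
    ∑ ℓ ∈ range (L + 1), a ℓ ≤ (1 - r)⁻¹ * a L := by
  have hK : 1 ≤ (1 - r)⁻¹ := one_le_inv₀ (by linarith) |>.mpr (by linarith)
  induction L with
  | zero => simpa using le_mul_of_one_le_left (ha 0) hK
  | succ L ih =>
    calc ∑ ℓ ∈ range (L + 1 + 1), a ℓ ≤ (1 - r)⁻¹ * (r * a (L + 1)) + a (L + 1) := by
          rw [sum_range_succ]
          gcongr
          exact ih.trans (by gcongr; exact hstep L)
      _ = (1 - r)⁻¹ * a (L + 1) := by
          field_simp [show 1 - r ≠ 0 by linarith]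
          ring

theorem sum_range_div_pow_rpow_neg_le {m h₀ c : ℝ} (hm : 1 < m) (hh₀ : 0 < h₀) (hc : 0 < c)
    (L : ℕ) :
    ∑ ℓ ∈ range (L + 1), (h₀ / m ^ ℓ) ^ (-c) ≤ (1 - m ^ (-c))⁻¹ * (h₀ / m ^ L) ^ (-c) := by
  have hm₀ : 0 < m := zero_lt_one.trans hm
  refine sum_range_succ_le_of_le_mul_succ (Real.rpow_nonneg hm₀.le _)
    (Real.rpow_lt_one_of_one_lt_of_neg hm (neg_neg_of_pos hc))
    (fun _ => Real.rpow_nonneg (by positivity) _) (fun _ => le_of_eq ?_) L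
  rw [← Real.mul_rpow hm₀.le (by positivity), pow_succ]
  field_simp

theorem rpow_neg_le_of_inv_le {x D ε α c : ℝ} (hx : 0 < x) (hD : 0 ≤ D) (hε : 0 < ε)
    (hc : 0 ≤ c) (h : x⁻¹ ≤ D * ε ^ (-α⁻¹)) : x ^ (-c) ≤ D ^ c * ε ^ (-c / α) := by
  calc x ^ (-c) = x⁻¹ ^ c := by rw [Real.rpow_neg hx.le, Real.inv_rpow hx.le]
    _ ≤ (D * ε ^ (-α⁻¹)) ^ c := by gcongr
    _ = D ^ c * ε ^ (-c / α) := by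
      rw [Real.mul_rpow hD (by positivity), ← Real.rpow_mul hε.le]
      ring_nf

theorem one_sub_rpow_neg_inv_pos {m c : ℝ} (hm : 1 < m) (hc : 0 < c) : 0 < (1 - m ^ (-c))⁻¹ :=
  inv_pos.mpr (sub_pos.mpr (Real.rpow_lt_one_of_one_lt_of_neg hm (neg_neg_of_pos hc)))

theorem sum_range_div_pow_rpow_neg_le_of_inv_le {m h₀ c D ε α : ℝ} {L : ℕ} (hm : 1 < m)
    (hh₀ : 0 < h₀) (hc : 0 < c) (hD : 0 ≤ D) (hε : 0 < ε)
    (h : (h₀ / m ^ L)⁻¹ ≤ D * ε ^ (-α⁻¹)) :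
    ∑ ℓ ∈ range (L + 1), (h₀ / m ^ ℓ) ^ (-c) ≤ (1 - m ^ (-c))⁻¹ * D ^ c * ε ^ (-c / α) := by
  have hr := one_sub_rpow_neg_inv_pos hm hc
  calc ∑ ℓ ∈ range (L + 1), (h₀ / m ^ ℓ) ^ (-c) ≤ (1 - m ^ (-c))⁻¹ * (h₀ / m ^ L) ^ (-c) :=
        sum_range_div_pow_rpow_neg_le hm hh₀ hc L
    _ ≤ (1 - m ^ (-c))⁻¹ * (D ^ c * ε ^ (-c / α)) := by
        have hm₀ : 0 < m := zero_lt_one.trans hm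
        gcongr
        exact rpow_neg_le_of_inv_le (by positivity) hD hε hc.le h
    _ = (1 - m ^ (-c))⁻¹ * D ^ c * ε ^ (-c / α) := by ring

theorem exists_div_pow_le_and_inv_le {m h₀ t : ℝ} (hm : 1 < m) (hh₀ : 0 < h₀) (ht : 0 < t) :
    ∃ L : ℕ, h₀ / m ^ L ≤ t ∧ (h₀ / m ^ L)⁻¹ ≤ max h₀⁻¹ (m / t) := by
  have hm₀ : 0 < m := zero_lt_one.trans hm
  have hex : ∃ L : ℕ, h₀ / m ^ L ≤ t := by
    obtain ⟨L, hL⟩ := pow_unbounded_of_one_lt (h₀ / t) hm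
    refine ⟨L, (div_le_iff₀ (pow_pos hm₀ L)).mpr ?_⟩
    rw [div_lt_iff₀ ht] at hL
    linarith
  refine ⟨Nat.find hex, Nat.find_spec hex, ?_⟩
  cases hL : Nat.find hex with
  | zero => simp
  | succ L =>
    have hcoarse : t < h₀ / m ^ L := not_le.mp (Nat.find_min hex (by omega))
    calc (h₀ / m ^ (L + 1))⁻¹ = m / (h₀ / m ^ L) := by field_simp; ring
      _ ≤ m / t := by gcongr
      _ ≤ max h₀⁻¹ (m / t) := le_max_right _ _

theorem exists_level_bias_le {m h₀ α c₁ ε : ℝ} (hm : 1 < m) (hh₀ : 0 < h₀) (hα : 0 < α)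
    (hc₁ : 0 < c₁) (hε : 0 < ε) (hε₁ : ε ≤ 1) :
    ∃ L : ℕ, (c₁ * (h₀ / m ^ L) ^ α) ^ 2 ≤ ε ^ 2 / 2 ∧
      (h₀ / m ^ L)⁻¹ ≤ max h₀⁻¹ (m * (√2 * c₁) ^ α⁻¹) * ε ^ (-α⁻¹) := by
  have hm₀ : 0 < m := zero_lt_one.trans hm
  set t := (ε / (√2 * c₁)) ^ α⁻¹ with ht_def
  obtain ⟨L, hfine, hinv⟩ := exists_div_pow_le_and_inv_le hm hh₀ (by positivity : 0 < t)
  refine ⟨L, ?_, hinv.trans ?_⟩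
  · calc (c₁ * (h₀ / m ^ L) ^ α) ^ 2 ≤ (c₁ * t ^ α) ^ 2 := by gcongr
      _ = ε ^ 2 / 2 := by
        rw [ht_def, ← Real.rpow_mul (by positivity), inv_mul_cancel₀ hα.ne', Real.rpow_one]
        field_simp
        rw [Real.sq_sqrt zero_le_two]
  · have hε' : 1 ≤ ε ^ (-α⁻¹) := Real.one_le_rpow_of_pos_of_le_one_of_nonpos hε hε₁
      (neg_nonpos.mpr (inv_nonneg.mpr hα.le))
    have ht : m / t = m * (√2 * c₁) ^ α⁻¹ * ε ^ (-α⁻¹) := by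
      rw [ht_def, Real.div_rpow hε.le (by positivity), Real.rpow_neg hε.le]
      field_simp
    rw [ht, max_mul_of_nonneg _ _ (by positivity)]
    exact max_le_max (le_mul_of_one_le_right (by positivity) hε') le_rfl

/-- With `w ℓ = √(v ℓ * C ℓ)` these are the cost-optimal sample numbers `N ℓ ∝ √(v ℓ / C ℓ)`
for costs `C ℓ` and variance budget `τ`; general weights `w` avoid the square roots. -/
noncomputable def sampleAllocation {ι : Type*} (s : Finset ι) (τ : ℝ) (v w : ι → ℝ) (ℓ : ι) :
    ℕ :=
  ⌈(∑ k ∈ s, w k) * v ℓ / (τ * w ℓ)⌉₊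

section sampleAllocation

variable {ι : Type*} {s : Finset ι} {τ : ℝ} {v w : ι → ℝ}

theorem one_le_sampleAllocation {ℓ : ι} (hℓ : ℓ ∈ s) (hτ : 0 < τ) (hv : 0 < v ℓ)
    (hw : ∀ k ∈ s, 0 < w k) : 1 ≤ sampleAllocation s τ v w ℓ := by
  have hwℓ := hw ℓ hℓ
  have hW : 0 < ∑ k ∈ s, w k := hwℓ.trans_le (single_le_sum (fun k hk => (hw k hk).le) hℓ)
  exact Nat.one_le_ceil_iff.mpr (by positivity)

theorem sum_div_sampleAllocation_le (V : ι → ℝ) (hτ : 0 < τ) (hv : ∀ ℓ ∈ s, 0 < v ℓ)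
    (hw : ∀ ℓ ∈ s, 0 < w ℓ) (hV : ∀ ℓ ∈ s, V ℓ ≤ v ℓ) :
    ∑ ℓ ∈ s, V ℓ / sampleAllocation s τ v w ℓ ≤ τ := by
  set W := ∑ k ∈ s, w k
  calc ∑ ℓ ∈ s, V ℓ / sampleAllocation s τ v w ℓ ≤ ∑ ℓ ∈ s, τ / W * w ℓ := by
        refine sum_le_sum fun ℓ hℓ => ?_
        have hvℓ := hv ℓ hℓ
        have hwℓ := hw ℓ hℓ
        have hW : 0 < W := hwℓ.trans_le (single_le_sum (fun k hk => (hw k hk).le) hℓ)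
        calc V ℓ / sampleAllocation s τ v w ℓ ≤ v ℓ / (W * v ℓ / (τ * w ℓ)) :=
              div_le_div₀ hvℓ.le (hV ℓ hℓ) (by positivity) (Nat.le_ceil _)
          _ = τ / W * w ℓ := by field_simp
    _ = τ * (W / W) := by rw [← mul_sum]; ring
    _ ≤ τ := mul_le_of_le_one_right hτ.le (div_self_le_one W)

theorem sum_sampleAllocation_mul_le (C : ι → ℝ) (κ : ℝ) (hτ : 0 < τ) (hv : ∀ ℓ ∈ s, 0 ≤ v ℓ)
    (hw : ∀ ℓ ∈ s, 0 < w ℓ) (hC : ∀ ℓ ∈ s, 0 ≤ C ℓ) (hvC : ∀ ℓ ∈ s, v ℓ * C ℓ = κ * w ℓ ^ 2) :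
    ∑ ℓ ∈ s, sampleAllocation s τ v w ℓ * C ℓ ≤ κ * (∑ ℓ ∈ s, w ℓ) ^ 2 / τ + ∑ ℓ ∈ s, C ℓ := by
  set W := ∑ k ∈ s, w k
  have hW : 0 ≤ W := sum_nonneg fun k hk => (hw k hk).le
  calc ∑ ℓ ∈ s, sampleAllocation s τ v w ℓ * C ℓ ≤ ∑ ℓ ∈ s, (κ * W / τ * w ℓ + C ℓ) := by
        refine sum_le_sum fun ℓ hℓ => ?_
        have hvℓ := hv ℓ hℓ
        have hwℓ := hw ℓ hℓ
        calc sampleAllocation s τ v w ℓ * C ℓ ≤ (W * v ℓ / (τ * w ℓ) + 1) * C ℓ :=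
              mul_le_mul_of_nonneg_right (Nat.ceil_lt_add_one (by positivity)).le (hC ℓ hℓ)
          _ = W * (v ℓ * C ℓ) / (τ * w ℓ) + C ℓ := by ring
          _ = κ * W / τ * w ℓ + C ℓ := by rw [hvC ℓ hℓ]; field_simp
    _ = κ * W ^ 2 / τ + ∑ ℓ ∈ s, C ℓ := by rw [sum_add_distrib, ← mul_sum]; ring

end sampleAllocation

theorem mul_rpow_mul_mul_rpow_neg {x : ℝ} (hx : 0 < x) (a b β γ : ℝ) :
    a * x ^ β * (b * x ^ (-γ)) = a * b * (x ^ (-((γ - β) / 2))) ^ 2 := by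
  rw [← Real.rpow_mul_natCast hx.le, mul_mul_mul_comm, ← Real.rpow_add hx]
  push_cast
  ring_nf

/-- `h₀ / m ^ ℓ` is the mesh width `h_ℓ`, and the weight `h_ℓ ^ (-(γ - β) / 2)` is proportional
to `√(V_ℓ C_ℓ)` for `V_ℓ = c₂ h_ℓ ^ β` and `C_ℓ ∝ h_ℓ ^ (-γ)`. -/
noncomputable def mlmcAllocation (m h₀ β γ c₂ τ : ℝ) (L : ℕ) : ℕ → ℕ :=
  sampleAllocation (range (L + 1)) τ (fun ℓ => c₂ * (h₀ / m ^ ℓ) ^ β)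
    (fun ℓ => (h₀ / m ^ ℓ) ^ (-((γ - β) / 2)))

section mlmcAllocation

variable {m h₀ β γ c₂ τ : ℝ} {L : ℕ}

theorem one_le_mlmcAllocation (hm : 0 < m) (hh₀ : 0 < h₀) (hc₂ : 0 < c₂) (hτ : 0 < τ) {ℓ : ℕ}
    (hℓ : ℓ ≤ L) : 1 ≤ mlmcAllocation m h₀ β γ c₂ τ L ℓ :=
  one_le_sampleAllocation (mem_range.mpr (Nat.lt_succ_of_le hℓ)) hτ (by positivity)
    fun _ _ => by positivity

theorem sum_div_mlmcAllocation_le (V : ℕ → ℝ) (hm : 0 < m) (hh₀ : 0 < h₀) (hc₂ : 0 < c₂)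
    (hτ : 0 < τ) (hV : ∀ ℓ, V ℓ ≤ c₂ * (h₀ / m ^ ℓ) ^ β) :
    ∑ ℓ ∈ range (L + 1), V ℓ / mlmcAllocation m h₀ β γ c₂ τ L ℓ ≤ τ :=
  sum_div_sampleAllocation_le V hτ (fun _ _ => by positivity) (fun _ _ => by positivity)
    fun ℓ _ => hV ℓ

theorem sum_mlmcAllocation_mul_le {c₃ D ε α : ℝ} (hm : 1 < m) (hh₀ : 0 < h₀) (hc₂ : 0 ≤ c₂)
    (hc₃ : 0 ≤ c₃) (hγ : 0 < γ) (hβγ : β < γ) (hτ : 0 < τ) (hD : 0 ≤ D) (hε : 0 < ε)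
    (hinv : (h₀ / m ^ L)⁻¹ ≤ D * ε ^ (-α⁻¹)) :
    ∑ ℓ ∈ range (L + 1), mlmcAllocation m h₀ β γ c₂ τ L ℓ * (c₃ * (h₀ / m ^ ℓ) ^ (-γ))
      ≤ c₂ * c₃ * ((1 - m ^ (-((γ - β) / 2)))⁻¹ * D ^ ((γ - β) / 2)
          * ε ^ (-((γ - β) / 2) / α)) ^ 2 / τ
        + c₃ * ((1 - m ^ (-γ))⁻¹ * D ^ γ) * ε ^ (-γ / α) := by
  have hm₀ : 0 < m := zero_lt_one.trans hm
  calc _ ≤ c₂ * c₃ * (∑ ℓ ∈ range (L + 1), (h₀ / m ^ ℓ) ^ (-((γ - β) / 2))) ^ 2 / τ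
          + c₃ * ∑ ℓ ∈ range (L + 1), (h₀ / m ^ ℓ) ^ (-γ) := by
        rw [mul_sum]
        exact sum_sampleAllocation_mul_le _ _ hτ (fun _ _ => by positivity)
          (fun _ _ => by positivity) (fun _ _ => by positivity)
          fun ℓ _ => mul_rpow_mul_mul_rpow_neg (by positivity) _ _ _ _
    _ ≤ _ := by
        rw [mul_assoc c₃]
        gcongr
        · exact sum_range_div_pow_rpow_neg_le_of_inv_le hm hh₀ (by linarith) hD hε hinv
        · exact sum_range_div_pow_rpow_neg_le_of_inv_le hm hh₀ hγ hD hε hinv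

end mlmcAllocation

theorem mlmc_cost_rpow_le {α β γ ε κ A B : ℝ} (hα : 0 < α) (hβα : β ≤ 2 * α) (hε : 0 < ε)
    (hε₁ : ε ≤ 1) (hB : 0 ≤ B) :
    κ * (A * ε ^ (-((γ - β) / 2) / α)) ^ 2 / (ε ^ 2 / 2) + B * ε ^ (-γ / α)
      ≤ (2 * κ * A ^ 2 + B) * ε ^ (-2 - (γ - β) / α) := by
  have hfirst : (ε ^ (-((γ - β) / 2) / α)) ^ 2 / (ε ^ 2 / 2) = 2 * ε ^ (-2 - (γ - β) / α) := by
    rw [← Real.rpow_mul_natCast hε.le, ← Real.rpow_natCast ε 2, div_div_eq_mul_div,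
      mul_div_right_comm, ← Real.rpow_sub hε, mul_comm]
    congr 2
    push_cast
    ring
  have hsecond : ε ^ (-γ / α) ≤ ε ^ (-2 - (γ - β) / α) := by
    refine Real.rpow_le_rpow_of_exponent_ge hε hε₁ ?_
    have : β / α ≤ 2 := (div_le_iff₀ hα).mpr (by linarith)
    have : -γ / α = -2 - (γ - β) / α + (2 - β / α) := by ring
    linarith
  calc κ * (A * ε ^ (-((γ - β) / 2) / α)) ^ 2 / (ε ^ 2 / 2) + B * ε ^ (-γ / α)
      = 2 * κ * A ^ 2 * ε ^ (-2 - (γ - β) / α) + B * ε ^ (-γ / α) := by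
        rw [mul_pow, mul_assoc, mul_div_assoc, mul_div_assoc, hfirst]
        ring
    _ ≤ (2 * κ * A ^ 2 + B) * ε ^ (-2 - (γ - β) / α) := by
        rw [add_mul]
        gcongr

theorem mlmc_complexity_beta_lt_gamma_general
    {Ω : Type*} [MeasurableSpace Ω] {P : Measure Ω}
    (M : ℕ) (hM : 2 ≤ M) (h₀ : ℝ) (hh₀ : 0 < h₀)
    (Q : Ω → ℝ)
    (Qlev : ℕ → Ω → ℝ)
    (Y : ℕ → Ω → ℝ)
    (α β γ c₁ c₂ c₃ : ℝ)
    (hα : 0 < α) (hγ : 0 < γ) (hc₁ : 0 < c₁) (hc₂ : 0 < c₂) (hc₃ : 0 < c₃)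
    (hβγ : β < γ) (hαβγ : α ≥ min β γ / 2)
    (hM1 : ∀ ℓ : ℕ, |∫ ω, (Qlev ℓ ω - Q ω) ∂P| ≤ c₁ * (h₀ / (M : ℝ) ^ ℓ) ^ α)
    (hM2 : ∀ ℓ : ℕ, variance (Y ℓ) P ≤ c₂ * (h₀ / (M : ℝ) ^ ℓ) ^ β) :
    ∃ K : ℝ, 0 < K ∧ ∀ ε : ℝ, 0 < ε → ε < Real.exp (-1) →
      ∃ (L : ℕ) (N : ℕ → ℕ), (∀ ℓ ≤ L, 1 ≤ N ℓ) ∧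
        (∑ ℓ ∈ range (L + 1), variance (Y ℓ) P / (N ℓ : ℝ))
            + (∫ ω, (Qlev L ω - Q ω) ∂P) ^ 2 ≤ ε ^ 2 ∧
        ∑ ℓ ∈ range (L + 1), (N ℓ : ℝ) * (c₃ * (h₀ / (M : ℝ) ^ ℓ) ^ (-γ))
            ≤ K * ε ^ (-2 - (γ - β) / α) := by
  have hm : (1 : ℝ) < M := by exact_mod_cast (by omega : 1 < M)
  have hδ : 0 < (γ - β) / 2 := by linarith
  have hβα : β ≤ 2 * α := by rw [min_eq_left hβγ.le] at hαβγ; linarith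
  set D := max h₀⁻¹ ((M : ℝ) * (√2 * c₁) ^ α⁻¹)
  have hD : 0 < D := lt_max_of_lt_left (inv_pos.mpr hh₀)
  have hCδ := one_sub_rpow_neg_inv_pos hm hδ
  have hCγ := one_sub_rpow_neg_inv_pos hm hγ
  refine ⟨2 * (c₂ * c₃) * ((1 - (M : ℝ) ^ (-((γ - β) / 2)))⁻¹ * D ^ ((γ - β) / 2)) ^ 2
    + c₃ * ((1 - (M : ℝ) ^ (-γ))⁻¹ * D ^ γ), by positivity, fun ε hε hεe => ?_⟩
  have hε₁ : ε ≤ 1 := hεe.le.trans (Real.exp_le_one_iff.mpr (by norm_num))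
  obtain ⟨L, hbias, hinv⟩ := exists_level_bias_le hm hh₀ hα hc₁ hε hε₁
  have hτ : 0 < ε ^ 2 / 2 := by positivity
  refine ⟨L, mlmcAllocation M h₀ β γ c₂ (ε ^ 2 / 2) L,
    fun ℓ hℓ => one_le_mlmcAllocation (by linarith) hh₀ hc₂ hτ hℓ, ?_, ?_⟩
  · have hvar := sum_div_mlmcAllocation_le (γ := γ) (L := L) _ (by linarith) hh₀ hc₂ hτ hM2
    have hbias' : (∫ ω, (Qlev L ω - Q ω) ∂P) ^ 2 ≤ ε ^ 2 / 2 := by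
      rw [← sq_abs]
      exact (pow_le_pow_left₀ (abs_nonneg _) (hM1 L) 2).trans hbias
    linarith
  · exact (sum_mlmcAllocation_mul_le hm hh₀ hc₂.le hc₃.le hγ hβγ hτ hD.le hε hinv).trans
      (mlmc_cost_rpow_le hα hβα hε hε₁ (by positivity))

/-- Multilevel Monte Carlo complexity theorem, case `β < γ`: under M1–M3 with
`α ≥ ½ min(β,γ)`, for every `0 < ε < e⁻¹` there are a level `L` and sample
numbers `N_ℓ` such that the MLMC mean square error is at most `ε²` and the
total cost is at most `K ε^(−2−(γ−β)/α)`, with `K` independent of `ε`. -/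
theorem mlmc_complexity_beta_lt_gamma
    {Ω : Type*} [MeasurableSpace Ω] {P : Measure Ω} [IsProbabilityMeasure P]
    (M : ℕ) (hM : 2 ≤ M) (h₀ : ℝ) (hh₀ : 0 < h₀)
    (Q : Ω → ℝ) (hQ : MemLp Q 2 P)
    (Qlev : ℕ → Ω → ℝ) (hQlev : ∀ ℓ, MemLp (Qlev ℓ) 2 P)
    (Y : ℕ → Ω → ℝ) (hY0 : Y 0 = Qlev 0)
    (hYl : ∀ ℓ : ℕ, Y (ℓ + 1) = fun ω => Qlev (ℓ + 1) ω - Qlev ℓ ω)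
    (α β γ c₁ c₂ c₃ : ℝ)
    (hα : 0 < α) (hβ : 0 < β) (hγ : 0 < γ) (hc₁ : 0 < c₁) (hc₂ : 0 < c₂) (hc₃ : 0 < c₃)
    (hβγ : β < γ) (hαβγ : α ≥ min β γ / 2)
    (hM1 : ∀ ℓ : ℕ, |∫ ω, (Qlev ℓ ω - Q ω) ∂P| ≤ c₁ * (h₀ / (M : ℝ) ^ ℓ) ^ α)
    (hM2 : ∀ ℓ : ℕ, variance (Y ℓ) P ≤ c₂ * (h₀ / (M : ℝ) ^ ℓ) ^ β) :
    ∃ K : ℝ, 0 < K ∧ ∀ ε : ℝ, 0 < ε → ε < Real.exp (-1) →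
      ∃ (L : ℕ) (N : ℕ → ℕ), (∀ ℓ ≤ L, 1 ≤ N ℓ) ∧
        (∑ ℓ ∈ range (L + 1), variance (Y ℓ) P / (N ℓ : ℝ))
            + (∫ ω, (Qlev L ω - Q ω) ∂P) ^ 2 ≤ ε ^ 2 ∧
        ∑ ℓ ∈ range (L + 1), (N ℓ : ℝ) * (c₃ * (h₀ / (M : ℝ) ^ ℓ) ^ (-γ))
            ≤ K * ε ^ (-2 - (γ - β) / α) :=
  mlmc_complexity_beta_lt_gamma_general M hM h₀ hh₀ Q Qlev Y α β γ c₁ c₂ c₃ hα hγ hc₁ hc₂ hc₃ hβγ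
    hαβγ hM1 hM2
end
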